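/- arXiv:2504.15795 — 2 statements merged into one kernel-verified Lean document; each statement's English description precedes it below -/
import Mathlib

section
/- Let β ∈ (1, 4/3), q = β/(4(β−1)), γ = (q−1)β/(q+1) and c₀ = 9/80, and for Λ > 1 set ε_m := Λ^{−q^m/(q−1)}. Fix an integer M ≥ 1, a constant A with 1 < A ≤ (1/2)·ε₀^{−γ}, and an initial diffusivity κ_M = κ ∈ [A^{−1}, A]·√c₀·ε_M^{2β/(q+1)}, and define the renormalised diffusivities backwards by κ_{m−1} = κ_m + c₀·ε_m^{2β}/κ_m for m = M, M−1, …, 1. Then there exists Λ₀ depending only on β such that for all Λ ≥ Λ₀ and all m ∈ {0, 1, …, M−1}: (√c₀/(2A))·ε_m^{β+γ} ≤ κ_m ≤ 2A·√c₀·ε_m^{β+γ}. In particular κ₀ is bounded above and below by positive constants independent of M and of the choice of κ in the admissible interval. -/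
open Filter Topology

private lemma stmt17_base (A sm sm1 Dm k : ℝ) (hA : 1 ≤ A) (hsm : 0 < sm)
    (hsm1 : sm1 = Dm * sm) (hDm : 0 ≤ Dm) (hk : 0 < k)
    (hl : sm ≤ A * k) (hu : k ≤ A * sm) :
    0 < k + sm * sm1 / k ∧ sm ≤ A * (1 + 2 * Dm) * (k + sm * sm1 / k) ∧
      k + sm * sm1 / k ≤ A * (1 + 2 * Dm) * sm := by
  subst hsm1
  have hx : 0 ≤ sm * (Dm * sm) / k := by positivity
  have ht : (k + sm * (Dm * sm) / k) * k = k ^ 2 + sm * (Dm * sm) := by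
    field_simp
  refine ⟨by linarith, ?_, ?_⟩
  · nlinarith [mul_nonneg (mul_nonneg (by linarith : (0:ℝ) ≤ A) hDm) hk.le]
  · rw [← mul_le_mul_iff_of_pos_right hk, ht]
    have h1 : k ^ 2 ≤ A * sm * k := by nlinarith
    have h2 : sm * (Dm * sm) ≤ Dm * (A * k) * sm := by nlinarith [mul_nonneg hDm hsm.le]
    nlinarith [mul_nonneg (mul_nonneg hDm (by linarith : (0:ℝ) ≤ A)) (mul_nonneg hsm.le hk.le)]

private lemma stmt17_step (A sm sm1 Dm Dm1 k : ℝ) (hA : 1 ≤ A) (hsm : 0 < sm)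
    (hsm1 : sm1 = Dm * sm) (hDm : 0 < Dm) (hDm8 : Dm ≤ 1/8) (hDs : Dm1 ≤ 4/9 * Dm)
    (hDm1 : 0 ≤ Dm1) (hk : 0 < k)
    (hl : sm1 ≤ A * (1 + 2 * Dm1) * k) (hu : k ≤ A * (1 + 2 * Dm1) * sm1) :
    0 < k + sm * sm1 / k ∧ sm ≤ A * (1 + 2 * Dm) * (k + sm * sm1 / k) ∧
      k + sm * sm1 / k ≤ A * (1 + 2 * Dm) * sm := by
  have hsm1pos : 0 < sm1 := by rw [hsm1]; positivity
  have ht : (k + sm * sm1 / k) * k = k ^ 2 + sm * sm1 := by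
    field_simp
  refine ⟨by positivity, ?_, ?_⟩
  · rw [← mul_le_mul_iff_of_pos_right hk, mul_assoc, ht]
    have h1 : sm * k ≤ sm * (A * (1 + 2 * Dm1) * sm1) :=
      mul_le_mul_of_nonneg_left hu hsm.le
    have h2 : sm * (A * (1 + 2 * Dm1) * sm1) ≤ A * (1 + 2 * Dm) * (sm * sm1) := by
      nlinarith [mul_nonneg (mul_nonneg (by linarith : (0:ℝ) ≤ A) hsm.le) hsm1pos.le]
    nlinarith [sq_nonneg k, mul_nonneg (by linarith : (0:ℝ) ≤ A) (by linarith : (0:ℝ) ≤ 1 + 2*Dm)]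
  · rw [← mul_le_mul_iff_of_pos_right hk, ht]
    have h1 : k ^ 2 ≤ A * (1 + 2 * Dm1) * sm1 * k := by nlinarith
    have h2 : sm * sm1 ≤ sm * (A * (1 + 2 * Dm1) * k) :=
      mul_le_mul_of_nonneg_left hl hsm.le
    -- (1+2Dm1)(1+Dm) ≤ 1+2Dm
    have key : (1 + 2 * Dm1) * (1 + Dm) ≤ 1 + 2 * Dm := by nlinarith
    have h3 : A * (1 + 2 * Dm1) * sm1 * k + sm * (A * (1 + 2 * Dm1) * k)
        ≤ A * (1 + 2 * Dm) * sm * k := by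
      rw [hsm1]
      have e : A * (1 + 2 * Dm1) * (Dm * sm) * k + sm * (A * (1 + 2 * Dm1) * k)
          = (A * sm * k) * ((1 + 2 * Dm1) * (1 + Dm)) := by ring
      rw [e]
      have : (A * sm * k) * ((1 + 2 * Dm1) * (1 + Dm)) ≤ (A * sm * k) * (1 + 2 * Dm) :=
        mul_le_mul_of_nonneg_left key (by positivity)
      linarith [this]
    linarith


set_option maxHeartbeats 1600000 in
/-- Sharpened two-sided bound on the Armstrong–Vicol renormalised diffusivities:
for `β ∈ (1,4/3)`, `q = β/(4(β−1))`, `γ = (q−1)β/(q+1)`, `c₀ = 9/80` and the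
hypergeometric scales `ε_m = Λ^{−q^m/(q−1)}`, there is `Λ₀` (depending only on `β`)
such that for all `Λ ≥ Λ₀`, all `M ≥ 1`, all `A` with `1 < A ≤ (1/2)ε₀^{−γ}`,
and any backward recursion `κ_{m−1} = κ_m + c₀ ε_m^{2β}/κ_m` started from
`κ_M ∈ [A⁻¹, A]·√c₀·ε_M^{2β/(q+1)}`, one has
`(√c₀/(2A))·ε_m^{β+γ} ≤ κ_m ≤ 2A√c₀·ε_m^{β+γ}` for all `m < M`. -/
theorem stmt_17 (β : ℝ) (hβ1 : 1 < β) (hβ2 : β < 4 / 3) :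
    ∀ q γ c₀ : ℝ, q = β / (4 * (β - 1)) → γ = (q - 1) * β / (q + 1) → c₀ = 9 / 80 →
    ∃ Λ₀ : ℝ, 1 < Λ₀ ∧
      ∀ Λ : ℝ, Λ₀ ≤ Λ →
      ∀ ε : ℕ → ℝ, (∀ m : ℕ, ε m = Λ ^ (-(q ^ m) / (q - 1))) →
      ∀ M : ℕ, 1 ≤ M →
      ∀ A : ℝ, 1 < A → A ≤ (1 / 2) * (ε 0) ^ (-γ) →
      ∀ κ : ℕ → ℝ,
        (∀ m : ℕ, 1 ≤ m → m ≤ M → κ (m - 1) = κ m + c₀ * (ε m) ^ (2 * β) / κ m) →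
        κ M ∈ Set.Icc (A⁻¹ * (Real.sqrt c₀ * (ε M) ^ (2 * β / (q + 1))))
                      (A * (Real.sqrt c₀ * (ε M) ^ (2 * β / (q + 1)))) →
        ∀ m : ℕ, m < M →
          Real.sqrt c₀ / (2 * A) * (ε m) ^ (β + γ) ≤ κ m ∧
          κ m ≤ 2 * A * Real.sqrt c₀ * (ε m) ^ (β + γ) := by
  intro q γ c₀ hq hγ hc₀
  have hβ0 : (0:ℝ) < β - 1 := by linarith
  have hq1 : 1 < q := by
    rw [hq, lt_div_iff₀ (by linarith : (0:ℝ) < 4*(β-1))]; linarith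
  have hqm : (0:ℝ) < q - 1 := by linarith
  have hqm' : q - 1 ≠ 0 := ne_of_gt hqm
  have hqp : (0:ℝ) < q + 1 := by linarith
  have hqp' : q + 1 ≠ 0 := ne_of_gt hqp
  have hγpos : 0 < γ := by
    rw [hγ]; positivity
  have hβγ : 0 < β + γ := by linarith
  have hβγ_eq : β + γ = 2*q*β/(q+1) := by
    rw [hγ]; field_simp; ring
  refine ⟨max 2 (max ((8:ℝ) ^ (β+γ)⁻¹) ((9/4:ℝ) ^ (((q-1)*(β+γ))⁻¹))), ?_, ?_⟩
  · exact lt_of_lt_of_le one_lt_two (le_max_left _ _)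
  intro Λ hΛ ε hε M hM A hA1 hA2 κ hrec hκM
  have hΛ2 : (2:ℝ) ≤ Λ := le_trans (le_max_left _ _) hΛ
  have hΛ1 : (1:ℝ) < Λ := by linarith
  have hΛpos : (0:ℝ) < Λ := by linarith
  -- smallness conditions
  have hcond1 : Λ ^ (-(β+γ)) ≤ 1/8 := by
    have h8 : ((8:ℝ) ^ (β+γ)⁻¹) ≤ Λ := le_trans (le_trans (le_max_left _ _) (le_max_right _ _)) hΛ
    have : (8:ℝ) ≤ Λ ^ (β+γ) := by
      calc (8:ℝ) = ((8:ℝ) ^ (β+γ)⁻¹) ^ (β+γ) := (Real.rpow_inv_rpow (by norm_num) (ne_of_gt hβγ)).symm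
        _ ≤ Λ ^ (β+γ) := Real.rpow_le_rpow (by positivity) h8 (le_of_lt hβγ)
    rw [Real.rpow_neg hΛpos.le]
    rw [inv_le_comm₀ (by positivity) (by norm_num)]
    linarith
  have hcond2 : Λ ^ (-((q-1)*(β+γ))) ≤ 4/9 := by
    have hx : (0:ℝ) < (q-1)*(β+γ) := by positivity
    have h9 : ((9/4:ℝ) ^ (((q-1)*(β+γ))⁻¹)) ≤ Λ := le_trans (le_trans (le_max_right _ _) (le_max_right _ _)) hΛ
    have : (9/4:ℝ) ≤ Λ ^ ((q-1)*(β+γ)) := by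
      calc (9/4:ℝ) = ((9/4:ℝ) ^ ((q-1)*(β+γ))⁻¹) ^ ((q-1)*(β+γ)) :=
            (Real.rpow_inv_rpow (by norm_num) (ne_of_gt hx)).symm
        _ ≤ Λ ^ ((q-1)*(β+γ)) := Real.rpow_le_rpow (by positivity) h9 hx.le
    rw [Real.rpow_neg hΛpos.le]
    rw [inv_le_comm₀ (by positivity) (by norm_num)]
    linarith
  -- epsilon facts
  have hεpos : ∀ m : ℕ, 0 < ε m := by
    intro m; rw [hε m]; exact Real.rpow_pos_of_pos hΛpos _
  have hεpow : ∀ (m : ℕ) (t : ℝ), ε m ^ t = Λ ^ (-(q ^ m) * t / (q-1)) := by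
    intro m t
    rw [hε m, ← Real.rpow_mul hΛpos.le]
    congr 1; ring
  have hqpow_pos : ∀ m : ℕ, (0:ℝ) < q ^ m := fun m => pow_pos (by linarith) m
  have hqpow_one : ∀ m : ℕ, (1:ℝ) ≤ q ^ m := fun m => one_le_pow₀ (le_of_lt hq1)
  -- define s and D
  set s : ℕ → ℝ := fun m => Real.sqrt c₀ * ε m ^ (β+γ) with hs_def
  set D : ℕ → ℝ := fun m => ε m ^ ((q-1)*(β+γ)) with hD_def
  have hc₀pos : (0:ℝ) < c₀ := by rw [hc₀]; norm_num
  have hsqrtpos : 0 < Real.sqrt c₀ := Real.sqrt_pos.mpr hc₀pos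
  have hspos : ∀ m, 0 < s m := by
    intro m
    exact mul_pos hsqrtpos (Real.rpow_pos_of_pos (hεpos m) _)
  have hDpos : ∀ m, 0 < D m := by
    intro m
    exact Real.rpow_pos_of_pos (hεpos m) _
  -- D m ≤ 1/8
  have hD18 : ∀ m, D m ≤ 1/8 := by
    intro m
    calc D m = Λ ^ (-(q ^ m) * ((q-1)*(β+γ)) / (q-1)) := hεpow m _
      _ ≤ Λ ^ (-(β+γ)) := by
          apply Real.rpow_le_rpow_left_iff hΛ1 |>.mpr
          rw [div_le_iff₀ hqm]
          nlinarith [mul_nonneg (sub_nonneg.mpr (hqpow_one m)) (le_of_lt (mul_pos hqm hβγ))]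
      _ ≤ 1/8 := hcond1
  -- D (m+1) ≤ (4/9) * D m
  have hDstep : ∀ m, D (m+1) ≤ (4/9) * D m := by
    intro m
    have hid : D (m+1) = ε m ^ ((q-1)*(q-1)*(β+γ)) * D m := by
      simp only [hD_def]
      rw [hεpow, hεpow, hεpow, ← Real.rpow_add hΛpos]
      congr 1
      rw [pow_succ]
      field_simp; ring
    rw [hid]
    have h1 : ε m ^ ((q-1)*(q-1)*(β+γ)) ≤ 4/9 := by
      calc ε m ^ ((q-1)*(q-1)*(β+γ)) = Λ ^ (-(q ^ m) * ((q-1)*(q-1)*(β+γ)) / (q-1)) := hεpow m _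
        _ ≤ Λ ^ (-((q-1)*(β+γ))) := by
            apply Real.rpow_le_rpow_left_iff hΛ1 |>.mpr
            rw [div_le_iff₀ hqm]
            nlinarith [mul_nonneg (sub_nonneg.mpr (hqpow_one m))
              (le_of_lt (mul_pos (mul_pos hqm hqm) hβγ))]
        _ ≤ 4/9 := hcond2
    have h2 : (0:ℝ) < D m := hDpos m
    nlinarith [h2]
  -- s (m+1) = D m * s m
  have hsD : ∀ m, s (m+1) = D m * s m := by
    intro m
    have hid : ε (m+1) ^ (β+γ) = ε m ^ ((q-1)*(β+γ)) * ε m ^ (β+γ) := by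
      rw [hεpow, hεpow, hεpow, ← Real.rpow_add hΛpos]
      congr 1
      rw [pow_succ]
      field_simp; ring
    simp only [hs_def, hD_def]
    rw [hid]; ring
  -- c₀ * ε (m+1) ^ (2β) = s m * s (m+1)
  have hC : ∀ m, c₀ * ε (m+1) ^ (2*β) = s m * s (m+1) := by
    intro m
    have hid : ε (m+1) ^ (2*β) = ε m ^ (β+γ) * ε (m+1) ^ (β+γ) := by
      rw [hεpow, hεpow, hεpow, ← Real.rpow_add hΛpos]
      congr 1
      rw [pow_succ, hβγ_eq]
      field_simp; ring
    have hcs : Real.sqrt c₀ * Real.sqrt c₀ = c₀ := Real.mul_self_sqrt hc₀pos.le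
    simp only [hs_def]
    rw [hid]
    linear_combination (ε m ^ (β+γ) * ε (m+1) ^ (β+γ)) * hcs.symm
  -- initial scale identity : sqrt c₀ * ε M ^ (2β/(q+1)) = s (M-1)
  have hinit : Real.sqrt c₀ * ε M ^ (2*β/(q+1)) = s (M-1) := by
    obtain ⟨N, rfl⟩ : ∃ N, M = N + 1 := ⟨M - 1, (Nat.succ_pred_eq_of_pos hM).symm⟩
    simp only [hs_def, Nat.add_sub_cancel]
    congr 1
    rw [hεpow, hεpow]
    congr 1
    rw [pow_succ, hβγ_eq]
    field_simp
  -- the invariant, proved by downward induction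
  have key : ∀ k m : ℕ, m + k = M - 1 →
      0 < κ m ∧ s m ≤ A * (1 + 2 * D m) * κ m ∧ κ m ≤ A * (1 + 2 * D m) * s m := by
    intro k
    induction k with
    | zero =>
      intro m hm
      have hmM : M = m + 1 := by omega
      have hrecM : κ m = κ (m+1) + c₀ * ε (m+1) ^ (2*β) / κ (m+1) := by
        have := hrec (m+1) (by omega) (by omega)
        simpa using this
      rw [hC m] at hrecM
      obtain ⟨hκl, hκu⟩ := hκM
      rw [hmM] at hinit
      simp only [Nat.add_sub_cancel] at hinit
      rw [hmM, hinit] at hκl hκu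
      have hk : 0 < κ (m+1) := by
        have : 0 < A⁻¹ * s m := mul_pos (inv_pos.mpr (by linarith)) (hspos m)
        linarith
      have hl : s m ≤ A * κ (m+1) := by
        rw [inv_mul_le_iff₀ (by linarith : (0:ℝ) < A)] at hκl
        linarith
      have := stmt17_base A (s m) (s (m+1)) (D m) (κ (m+1)) hA1.le (hspos m)
        (hsD m) (hDpos m).le hk hl hκu
      rw [hrecM]
      exact this
    | succ k ih =>
      intro m hm
      obtain ⟨hkpos, hklow, hkup⟩ := ih (m+1) (by omega)
      have hrecm : κ m = κ (m+1) + c₀ * ε (m+1) ^ (2*β) / κ (m+1) := by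
        have := hrec (m+1) (by omega) (by omega)
        simpa using this
      rw [hC m] at hrecm
      have := stmt17_step A (s m) (s (m+1)) (D m) (D (m+1)) (κ (m+1)) hA1.le (hspos m)
        (hsD m) (hDpos m) (hD18 m) (hDstep m) (hDpos (m+1)).le hkpos ?_ ?_
      · rw [hrecm]; exact this
      · -- s(m+1) ≤ A(1+2D(m+1)) κ(m+1)
        exact hklow
      · exact hkup
  -- conclusion
  intro m hm
  obtain ⟨hkpos, hklow, hkup⟩ := key (M - 1 - m) m (by omega)
  have hsm_eq : s m = Real.sqrt c₀ * ε m ^ (β+γ) := rfl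
  have hD8 := hD18 m
  have hDp := (hDpos m).le
  have hsp := hspos m
  have hApos : (0:ℝ) < A := by linarith
  rw [hsm_eq] at hklow hkup hsp
  clear key hκM hrec hε hεpow hεpos hC hsD hDstep hD18 hDpos hspos hinit hsm_eq hA2
  clear hs_def hD_def hqpow_pos hqpow_one hcond1 hcond2
  clear_value s D
  constructor
  · rw [div_mul_eq_mul_div, div_le_iff₀ (by positivity : (0:ℝ) < 2*A)]
    nlinarith [mul_nonneg (mul_nonneg hApos.le (by linarith : (0:ℝ) ≤ 1 - 2*D m)) hkpos.le]
  · nlinarith [mul_nonneg (mul_nonneg hApos.le (by linarith : (0:ℝ) ≤ 1 - 2*D m)) hsp.le]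
end

section
/- Let Λ > 1 and β > 0, and define G : (0,∞) → (0,∞) by G(z) = Λ^{−β}·(z + 1/z). Then z* = (Λ^β − 1)^{−1/2} is the unique fixed point of G in (0,∞), and for every z₀ > 0 the iterates G^n(z₀) converge to z* as n → ∞. Consequently, for the geometric scale separation ε_m = Λ^{−m}, the pullback limits of the renormalised diffusivity recursion κ_{m−1} = κ_m + c₀·ε_m^{2β}/κ_m converge, after the rescaling κ_m = √c₀·Λ^{−βm}·z_m, to K_m = Λ^{−βm}·√( c₀/(Λ^β − 1) ) for every m ≥ 0. -/
open Filter Topology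

private lemma fpos {a t : ℝ} (ha0 : 0 < a) (ha1 : a < 1) (ht : 0 < t) :
    0 < a * t + (1 - a) / t :=
  add_pos (mul_pos ha0 ht) (div_pos (by linarith) ht)

private lemma fkey {a t : ℝ} (ha0 : 0 < a) (ha1 : a < 1) (ht : 0 < t) :
    max (a * t + (1 - a) / t) (1 / (a * t + (1 - a) / t)) - 1
      ≤ max a (1 - a) * (max t (1 / t) - 1) := by
  have hX : 0 < a * t ^ 2 + (1 - a) := by nlinarith [sq_nonneg t]
  have hrs : a * t + (1 - a) / t = (a * t ^ 2 + (1 - a)) / t := by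
    field_simp
  rw [hrs, one_div_div, sub_le_iff_le_add]
  rcases le_total 1 t with h1 | h1
  · have hWt : max t (1 / t) = t := max_eq_left (by
      rw [div_le_iff₀ ht]; nlinarith)
    rw [hWt]
    refine max_le ?_ ?_
    · rw [div_le_iff₀ ht]
      have h2 : a ≤ max a (1 - a) := le_max_left _ _
      nlinarith [mul_le_mul_of_nonneg_right h2 (sub_nonneg.mpr h1)]
    · rw [div_le_iff₀ hX]
      have h2 : 1 - a ≤ max a (1 - a) := le_max_right _ _
      have h3 : (1 - a) * (t - 1) ≤ max a (1 - a) * (t - 1) :=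
        mul_le_mul_of_nonneg_right h2 (sub_nonneg.mpr h1)
      nlinarith [mul_nonneg (mul_nonneg ha0.le (sub_nonneg.mpr h1)) (sub_nonneg.mpr h1),
        mul_nonneg (sub_nonneg.mpr ha1.le) (sub_nonneg.mpr h1),
        mul_nonneg (mul_nonneg ha0.le (sub_nonneg.mpr h1)) ht.le]
  · have hWt : max t (1 / t) = 1 / t := max_eq_right (by
      rw [le_div_iff₀ ht]; nlinarith)
    rw [hWt]
    have hfrac : max a (1 - a) * (1 / t - 1) + 1
        = (max a (1 - a) * (1 - t) + t) / t := by
      field_simp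
    rw [hfrac]
    refine max_le ?_ ?_
    · rw [div_le_div_iff₀ ht ht]
      have h2 : 1 - a ≤ max a (1 - a) := le_max_right _ _
      have h3 : (1 - a) * (1 - t) ≤ max a (1 - a) * (1 - t) :=
        mul_le_mul_of_nonneg_right h2 (sub_nonneg.mpr h1)
      nlinarith [mul_nonneg (mul_nonneg ha0.le (sub_nonneg.mpr h1)) ht.le]
    · rw [div_le_div_iff₀ hX ht]
      have h2 : a ≤ max a (1 - a) := le_max_left _ _
      have h3 : a * (1 - t) ≤ max a (1 - a) * (1 - t) :=
        mul_le_mul_of_nonneg_right h2 (sub_nonneg.mpr h1)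
      have h4 : (0:ℝ) ≤ a + t - a * t ^ 2 := by nlinarith
      nlinarith [mul_nonneg (mul_nonneg (sub_nonneg.mpr h1) (sub_nonneg.mpr ha1.le)) h4,
        mul_le_mul_of_nonneg_right h3 hX.le]

private lemma fiter {a : ℝ} (ha0 : 0 < a) (ha1 : a < 1) {t₀ : ℝ} (ht₀ : 0 < t₀) (n : ℕ) :
    0 < (fun t : ℝ => a * t + (1 - a) / t)^[n] t₀ ∧
    max ((fun t : ℝ => a * t + (1 - a) / t)^[n] t₀)
        (1 / (fun t : ℝ => a * t + (1 - a) / t)^[n] t₀) - 1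
      ≤ max a (1 - a) ^ n * (max t₀ (1 / t₀) - 1) := by
  induction n with
  | zero => simpa using ht₀
  | succ n ih =>
    obtain ⟨hp, hb⟩ := ih
    rw [Function.iterate_succ_apply']
    have hq0 : (0:ℝ) ≤ max a (1 - a) := le_trans ha0.le (le_max_left _ _)
    refine ⟨fpos ha0 ha1 hp, ?_⟩
    calc max (a * (fun t : ℝ => a * t + (1 - a) / t)^[n] t₀ + (1 - a) / (fun t : ℝ => a * t + (1 - a) / t)^[n] t₀)
          (1 / (a * (fun t : ℝ => a * t + (1 - a) / t)^[n] t₀ + (1 - a) / (fun t : ℝ => a * t + (1 - a) / t)^[n] t₀)) - 1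
        ≤ max a (1 - a) * (max ((fun t : ℝ => a * t + (1 - a) / t)^[n] t₀)
            (1 / (fun t : ℝ => a * t + (1 - a) / t)^[n] t₀) - 1) := fkey ha0 ha1 hp
      _ ≤ max a (1 - a) * (max a (1 - a) ^ n * (max t₀ (1 / t₀) - 1)) :=
          mul_le_mul_of_nonneg_left hb hq0
      _ = max a (1 - a) ^ (n + 1) * (max t₀ (1 / t₀) - 1) := by ring

private lemma absle {x : ℝ} (hx : 0 < x) : |x - 1| ≤ max x (1/x) - 1 := by
  rcases le_total 1 x with h | h
  · rw [abs_of_nonneg (by linarith)]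
    have := le_max_left x (1/x); linarith
  · rw [abs_of_nonpos (by linarith)]
    have h2 : 1 - x ≤ 1/x - 1 := by
      rw [← sub_nonneg]
      have heq : 1/x - 1 - (1 - x) = (1 - x)^2 / x := by field_simp
      rw [heq]; positivity
    have := le_max_right x (1/x); linarith

private lemma ftend {a : ℝ} (ha0 : 0 < a) (ha1 : a < 1) {t₀ : ℝ} (ht₀ : 0 < t₀) :
    Filter.Tendsto (fun n : ℕ => (fun t : ℝ => a * t + (1 - a) / t)^[n] t₀)
      Filter.atTop (nhds 1) := by
  have hq0 : (0:ℝ) ≤ max a (1 - a) := le_trans ha0.le (le_max_left _ _)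
  have hq1 : max a (1 - a) < 1 := max_lt ha1 (by linarith)
  rw [tendsto_iff_dist_tendsto_zero]
  simp only [Real.dist_eq]
  apply squeeze_zero (fun n => abs_nonneg _)
    (fun n => le_trans (absle (fiter ha0 ha1 ht₀ n).1) (fiter ha0 ha1 ht₀ n).2)
  simpa using (tendsto_pow_atTop_nhds_zero_of_lt_one hq0 hq1).mul_const (max t₀ (1/t₀) - 1)

/-- For `Λ > 1`, `β > 0` and `G(z) = Λ^{−β}(z + 1/z)`, the point
`z* = (Λ^β − 1)^{−1/2}` is the unique positive fixed point of `G`, the iterates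
`G^n(z₀)` converge to `z*` for every `z₀ > 0`, and consequently, for the geometric
scales `ε_m = Λ^{−m}`, the pullback limits of the renormalised diffusivity
recursion `κ_{m−1} = κ_m + c₀ ε_m^{2β}/κ_m`, rescaled via `κ_m = √c₀ Λ^{−βm} z_m`,
converge to `K_m = Λ^{−βm}·√(c₀/(Λ^β − 1))` for every `m ≥ 0`. -/
theorem stmt_18 (Λ β : ℝ) (hΛ : 1 < Λ) (hβ : 0 < β) :
    (fun z : ℝ => Λ ^ (-β) * (z + 1 / z)) (1 / Real.sqrt (Λ ^ β - 1))
        = 1 / Real.sqrt (Λ ^ β - 1) ∧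
    (∀ z : ℝ, 0 < z → Λ ^ (-β) * (z + 1 / z) = z → z = 1 / Real.sqrt (Λ ^ β - 1)) ∧
    (∀ z₀ : ℝ, 0 < z₀ →
      Filter.Tendsto (fun nIter : ℕ => (fun z : ℝ => Λ ^ (-β) * (z + 1 / z))^[nIter] z₀)
        Filter.atTop (nhds (1 / Real.sqrt (Λ ^ β - 1)))) ∧
    (∀ c₀ : ℝ, 0 < c₀ → ∀ z₀ : ℝ, 0 < z₀ →
      ∀ κ : ℕ → ℕ → ℝ,
        (∀ M j : ℕ, 1 ≤ j → j ≤ M →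
          κ M (j - 1) = κ M j + c₀ * (Λ ^ (-(j : ℝ))) ^ (2 * β) / κ M j) →
        (∀ M : ℕ, κ M M = Real.sqrt c₀ * Λ ^ (-(β * M)) * z₀) →
        ∀ m : ℕ,
          Filter.Tendsto (fun M : ℕ => κ M m) Filter.atTop
            (nhds (Λ ^ (-(β * m)) * Real.sqrt (c₀ / (Λ ^ β - 1))))) := by
  have hΛ0 : (0:ℝ) < Λ := lt_trans one_pos hΛ
  have hb : 1 < Λ ^ β := (Real.one_lt_rpow_iff_of_pos hΛ0).mpr (Or.inl ⟨hΛ, hβ⟩)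
  have hb0 : (0:ℝ) < Λ ^ β := lt_trans one_pos hb
  set a : ℝ := Λ ^ (-β) with ha_def
  have ha : a = (Λ ^ β)⁻¹ := Real.rpow_neg hΛ0.le β
  have ha0 : 0 < a := by rw [ha]; positivity
  have ha1 : a < 1 := by rw [ha]; exact inv_lt_one_of_one_lt₀ hb
  have haΛ : a * Λ ^ β = 1 := by rw [ha]; field_simp
  set S : ℝ := Real.sqrt (Λ ^ β - 1) with hS_def
  have hS0 : 0 < S := Real.sqrt_pos.mpr (by linarith)
  have hS2 : S ^ 2 = Λ ^ β - 1 := Real.sq_sqrt (by linarith)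
  have h1a : 1 - a = a * S ^ 2 := by rw [hS2]; linear_combination -haΛ
  -- conjugation
  have hGiter : ∀ z : ℝ, 0 < z → ∀ n : ℕ,
      (fun z : ℝ => a * (z + 1 / z))^[n] z
        = (1/S) * (fun t : ℝ => a * t + (1 - a) / t)^[n] (z * S) := by
    intro z hz n
    induction n with
    | zero => simp only [Function.iterate_zero_apply]; field_simp
    | succ n ih =>
      rw [Function.iterate_succ_apply', Function.iterate_succ_apply', ih]
      have hw : 0 < (fun t : ℝ => a * t + (1 - a) / t)^[n] (z * S) := by
        clear ih
        induction n with
        | zero => simpa using mul_pos hz hS0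
        | succ n ih2 => rw [Function.iterate_succ_apply']; exact fpos ha0 ha1 ih2
      set w := (fun t : ℝ => a * t + (1 - a) / t)^[n] (z * S)
      show a * (1/S * w + 1 / (1/S * w)) = 1/S * (a * w + (1-a)/w)
      field_simp
      linear_combination -h1a
  have htend3 : ∀ z₀ : ℝ, 0 < z₀ →
      Filter.Tendsto (fun n : ℕ => (fun z : ℝ => a * (z + 1 / z))^[n] z₀)
        Filter.atTop (nhds (1 / S)) := by
    intro z₀ hz₀
    have := (ftend ha0 ha1 (mul_pos hz₀ hS0)).const_mul (1/S)
    simp only [mul_one] at this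
    exact this.congr (fun n => (hGiter z₀ hz₀ n).symm)
  refine ⟨?_, ?_, ?_, ?_⟩
  · show a * (1/S + 1/(1/S)) = 1/S
    field_simp
    linear_combination -h1a
  · intro z hz heq
    have h2 : a * (z^2 + 1) = z^2 := by
      field_simp at heq
      linear_combination heq
    have h3 : (z * S - 1) * (z * S + 1) = 0 := by
      nlinarith [h1a, h2]
    rcases mul_eq_zero.mp h3 with h | h
    · field_simp
      linarith
    · nlinarith [mul_pos hz hS0]
  · intro z₀ hz₀
    exact htend3 z₀ hz₀
  · intro c₀ hc₀ z₀ hz₀ κ hrec hinit m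
    have hcs : 0 < Real.sqrt c₀ := Real.sqrt_pos.mpr hc₀
    have hc : Real.sqrt c₀ ^ 2 = c₀ := Real.sq_sqrt hc₀.le
    have hGpos : ∀ n : ℕ, 0 < (fun z : ℝ => a * (z + 1 / z))^[n] z₀ := by
      intro n
      rw [hGiter z₀ hz₀ n]
      refine mul_pos (by positivity) ?_
      induction n with
      | zero => simpa using mul_pos hz₀ hS0
      | succ n ih2 => rw [Function.iterate_succ_apply']; exact fpos ha0 ha1 ih2
    have hform : ∀ M k : ℕ, k ≤ M →
        κ M (M - k) = Real.sqrt c₀ * Λ ^ (-(β * ((M - k : ℕ) : ℝ)))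
          * (fun z : ℝ => a * (z + 1 / z))^[k] z₀ := by
      intro M k
      induction k with
      | zero => intro _; simpa using hinit M
      | succ k ih =>
        intro hkM
        have hk : k ≤ M := le_of_lt (Nat.lt_of_succ_le hkM)
        have hj1 : 1 ≤ M - k := by omega
        have hjM : M - k ≤ M := Nat.sub_le M k
        have hsub : M - (k + 1) = (M - k) - 1 := by omega
        have hcast : (((M - k : ℕ) - 1 : ℕ) : ℝ) = ((M - k : ℕ) : ℝ) - 1 := by
          have := Nat.cast_sub hj1 (R := ℝ); simpa using this
        set j : ℝ := ((M - k : ℕ) : ℝ) with hj_def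
        have hrecM := hrec M (M - k) hj1 hjM
        rw [hsub, hrecM, ih hk]
        rw [Function.iterate_succ_apply', hcast]
        set w := (fun z : ℝ => a * (z + 1 / z))^[k] z₀ with hw_def
        have hw : 0 < w := hGpos k
        show Real.sqrt c₀ * Λ ^ (-(β * j)) * w + c₀ * (Λ ^ (-j)) ^ (2 * β)
            / (Real.sqrt c₀ * Λ ^ (-(β * j)) * w)
          = Real.sqrt c₀ * Λ ^ (-(β * (j - 1))) * (a * (w + 1/w))
        have hP : 0 < Λ ^ (-(β * j)) := Real.rpow_pos_of_pos hΛ0 _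
        have e1 : (Λ ^ (-j)) ^ (2 * β) = (Λ ^ (-(β * j))) ^ 2 := by
          rw [← Real.rpow_natCast (Λ ^ (-(β * j))) 2, ← Real.rpow_mul hΛ0.le,
            ← Real.rpow_mul hΛ0.le]
          norm_num
          ring_nf
        have e2 : Λ ^ (-(β * (j - 1))) = Λ ^ (-(β * j)) * Λ ^ β := by
          rw [← Real.rpow_add hΛ0]; ring_nf
        rw [e1, e2, ha_def]
        rw [← ha_def]
        field_simp
        linear_combination (-1) * hc + (-(Real.sqrt c₀^2 * w^2) - Real.sqrt c₀^2) * haΛ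
    have hev : ∀ᶠ M in Filter.atTop, κ M m
        = Real.sqrt c₀ * Λ ^ (-(β * (m : ℝ))) * (fun z : ℝ => a * (z + 1 / z))^[M - m] z₀ := by
      filter_upwards [Filter.eventually_ge_atTop m] with M hM
      have := hform M (M - m) (Nat.sub_le M m)
      rwa [Nat.sub_sub_self hM] at this
    have hlim : Real.sqrt c₀ * Λ ^ (-(β * (m : ℝ))) * (1 / S)
        = Λ ^ (-(β * m)) * Real.sqrt (c₀ / (Λ ^ β - 1)) := by
      rw [Real.sqrt_div hc₀.le]
      ring
    have htt : Filter.Tendsto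
        (fun M : ℕ => Real.sqrt c₀ * Λ ^ (-(β * (m : ℝ)))
          * (fun z : ℝ => a * (z + 1 / z))^[M - m] z₀) Filter.atTop
        (nhds (Λ ^ (-(β * m)) * Real.sqrt (c₀ / (Λ ^ β - 1)))) := by
      rw [← hlim]
      exact ((htend3 z₀ hz₀).comp (Filter.tendsto_sub_atTop_nat m)).const_mul _
    exact htt.congr' (hev.mono fun M h => h.symm)
end
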